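/- arXiv:2012.05639 — 6 statements merged into one kernel-verified Lean document; each statement's English description precedes it below -/
import Mathlib

section
/- Let n ≥ 1 and b ∈ Mat_n. Suppose p, q : ℝ → Mat_n are twice differentiable and satisfy the reduced system p''(z) = −(z/2) p(z) − b p(z) − 2 p(z) q(z) p(z) and q''(z) = −(z/2) q(z) − q(z) b − 2 q(z) p(z) q(z) for all z ∈ ℝ. Define r(t,x) = ((t³ − 3xt)/6)·I − t·b ∈ Mat_n, z(t,x) = x − t²/2, and set u(t,x) = exp(r(t,x))·p(z(t,x)) and v(t,x) = q(z(t,x))·exp(−r(t,x)), where exp is the matrix exponential. Then u and v satisfy the matrix nonlinear Schrödinger system u_t = u_{xx} + 2 u v u and v_t = −v_{xx} − 2 v u v at every point (t, x) ∈ ℝ × ℝ. -/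
/-!
All values of `r` are polynomials in `b`, hence commute, so `∂ exp r = exp r · ∂r` with
`∂ₓ r = -t/2` and `∂ₜ r = (t² - x)/2 - b`, while `∂ₓ z = 1` and `∂ₜ z = -t`. This gives
`u_t - u_xx = exp r · (((t² - x)/2 - t²/4) p - b p - p'') = exp r · (-(z/2) p - b p - p'')`,
which the reduced equation turns into `2 exp r · p q p = 2 u v u`, as `exp (-r) exp r = 1`.
The computation for `v` is the mirror image.
-/

attribute [local instance] Matrix.normedAddCommGroup Matrix.normedSpace

/-- Partial derivative in the first (time) variable. -/
noncomputable def partialT {M : Type*} [NormedAddCommGroup M] [NormedSpace ℝ M]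
    (F : ℝ × ℝ → M) (p : ℝ × ℝ) : M :=
  deriv (fun s => F (s, p.2)) p.1

/-- Partial derivative in the second (space) variable. -/
noncomputable def partialX {M : Type*} [NormedAddCommGroup M] [NormedSpace ℝ M]
    (F : ℝ × ℝ → M) (p : ℝ × ℝ) : M :=
  deriv (fun s => F (p.1, s)) p.2

/-- `r(t,x) = ((t³ − 3xt)/6)·I − t·b`. -/
noncomputable def rMat (n : ℕ) (b : Matrix (Fin n) (Fin n) ℂ) (t x : ℝ) :
    Matrix (Fin n) (Fin n) ℂ :=
  (((t^3 - 3*x*t)/6 : ℝ) : ℂ) • (1 : Matrix (Fin n) (Fin n) ℂ) - (t : ℂ) • b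

/-- the similarity variable `z(t,x) = x − t²/2`. -/
noncomputable def zRed (t x : ℝ) : ℝ := x - t^2/2

/-- `u(t,x) = exp(r(t,x)) · p(z(t,x))`. -/
noncomputable def uRed (n : ℕ) (b : Matrix (Fin n) (Fin n) ℂ)
    (p : ℝ → Matrix (Fin n) (Fin n) ℂ) (w : ℝ × ℝ) : Matrix (Fin n) (Fin n) ℂ :=
  NormedSpace.exp (rMat n b w.1 w.2) * p (zRed w.1 w.2)

/-- `v(t,x) = q(z(t,x)) · exp(−r(t,x))`. -/
noncomputable def vRed (n : ℕ) (b : Matrix (Fin n) (Fin n) ℂ)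
    (q : ℝ → Matrix (Fin n) (Fin n) ℂ) (w : ℝ × ℝ) : Matrix (Fin n) (Fin n) ℂ :=
  q (zRed w.1 w.2) * NormedSpace.exp (-(rMat n b w.1 w.2))

open NormedSpace

section ExpDeriv

variable {𝔸 : Type*} [NormedRing 𝔸] [NormedAlgebra ℝ 𝔸] [CompleteSpace 𝔸]
  {A : ℝ → 𝔸} {A' : 𝔸} {F : ℝ → 𝔸} {F' : 𝔸} {s : ℝ}

theorem exp_add_of_commute_real {x y : 𝔸} (h : Commute x y) : exp (x + y) = exp x * exp y :=
  letI : NormedAlgebra ℚ 𝔸 := NormedAlgebra.restrictScalars ℚ ℝ 𝔸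
  exp_add_of_commute h

theorem hasDerivAt_exp_sub_self (hA : HasDerivAt A A' s) :
    HasDerivAt (fun s' => exp (A s' - A s)) A' s :=
  (hasFDerivAt_exp_zero (𝕂 := ℝ) (𝔸 := 𝔸)).comp_hasDerivAt_of_eq s (hA.sub_const (A s))
    (sub_self _).symm

theorem hasDerivAt_exp_of_commute (hA : HasDerivAt A A' s) (hcomm : ∀ s', Commute (A s) (A s')) :
    HasDerivAt (fun s => exp (A s)) (exp (A s) * A') s := by
  have hsplit : (fun s' => exp (A s')) = fun s' => exp (A s) * exp (A s' - A s) := by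
    funext s'
    rw [← exp_add_of_commute_real ((hcomm s').sub_right (Commute.refl _)), add_sub_cancel]
  simpa [hsplit] using (hasDerivAt_exp_sub_self hA).const_mul (exp (A s))

theorem hasDerivAt_exp_of_commute' (hA : HasDerivAt A A' s) (hcomm : ∀ s', Commute (A s) (A s')) :
    HasDerivAt (fun s => exp (A s)) (A' * exp (A s)) s := by
  have hsplit : (fun s' => exp (A s')) = fun s' => exp (A s' - A s) * exp (A s) := by
    funext s'
    rw [← exp_add_of_commute_real ((hcomm s').sub_right (Commute.refl _)).symm, sub_add_cancel]
  simpa [hsplit] using (hasDerivAt_exp_sub_self hA).mul_const (exp (A s))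

theorem hasDerivAt_exp_mul (hA : HasDerivAt A A' s) (hcomm : ∀ s', Commute (A s) (A s'))
    (hF : HasDerivAt F F' s) :
    HasDerivAt (fun s => exp (A s) * F s) (exp (A s) * (A' * F s + F')) s :=
  ((hasDerivAt_exp_of_commute hA hcomm).mul hF).congr_deriv (by rw [mul_add, mul_assoc])

theorem hasDerivAt_mul_exp (hA : HasDerivAt A A' s) (hcomm : ∀ s', Commute (A s) (A s'))
    (hF : HasDerivAt F F' s) :
    HasDerivAt (fun s => F s * exp (A s)) ((F s * A' + F') * exp (A s)) s :=
  (hF.mul (hasDerivAt_exp_of_commute' hA hcomm)).congr_deriv (by rw [add_mul, mul_assoc, add_comm])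

end ExpDeriv

theorem hasDerivAt_zRed_x (t x : ℝ) : HasDerivAt (zRed t) 1 x :=
  (hasDerivAt_id x).sub_const (t ^ 2 / 2)

theorem hasDerivAt_zRed_t (t x : ℝ) : HasDerivAt (fun s => zRed s x) (-t) t :=
  (((hasDerivAt_pow 2 t).div_const 2).const_sub x).congr_deriv (by push_cast; ring)

section Reduction

variable {n : ℕ} (b : Matrix (Fin n) (Fin n) ℂ) {p q : ℝ → Matrix (Fin n) (Fin n) ℂ}

theorem commute_rMat (t x t' x' : ℝ) : Commute (rMat n b t x) (rMat n b t' x') := by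
  unfold rMat
  refine .sub_left (.sub_right ?_ ?_) (.sub_right ?_ ?_)
  · exact ((Commute.one_right _).smul_left _).smul_right _
  · exact ((Commute.one_left _).smul_left _).smul_right _
  · exact ((Commute.one_right _).smul_left _).smul_right _
  · exact ((Commute.refl b).smul_left _).smul_right _

theorem hasDerivAt_rMat_x (t x : ℝ) :
    HasDerivAt (fun s => rMat n b t s) ((-(t : ℂ) / 2) • 1) x := by
  have hc : HasDerivAt (fun s : ℝ => (t ^ 3 - 3 * s * t) / 6) (-t / 2) x :=
    ((((hasDerivAt_id x).const_mul 3).mul_const t).const_sub (t ^ 3)).div_const 6 |>.congr_deriv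
      (by ring)
  exact (hc.ofReal_comp.smul_const 1).sub_const ((t : ℂ) • b) |>.congr_deriv (by push_cast; ring_nf)

theorem hasDerivAt_rMat_t (t x : ℝ) :
    HasDerivAt (fun s => rMat n b s x) ((((t : ℂ) ^ 2 - x) / 2) • 1 - b) t := by
  have hc : HasDerivAt (fun s : ℝ => (s ^ 3 - 3 * x * s) / 6) ((t ^ 2 - x) / 2) t :=
    ((hasDerivAt_pow 3 t).sub ((hasDerivAt_id t).const_mul (3 * x))).div_const 6 |>.congr_deriv
      (by push_cast; ring)
  have hb : HasDerivAt (fun s : ℝ => (s : ℂ) • b) b t :=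
    (hasDerivAt_id t).ofReal_comp.smul_const b |>.congr_deriv (by simp)
  exact (hc.ofReal_comp.smul_const 1).sub hb |>.congr_deriv (by push_cast; ring_nf)

/- The derivatives `h` below are computed in the Banach algebra of the `L∞` operator norm
(`Matrix.Norms.Operator`); it has the same topology as the entrywise norm of `partialT` and
`partialX`, so the two `HasDerivAt` statements agree definitionally. -/

theorem partialX_uRed (hp : Differentiable ℝ p) (t x : ℝ) :
    partialX (uRed n b p) (t, x)
      = exp (rMat n b t x) * (deriv p (zRed t x) - ((t : ℂ) / 2) • p (zRed t x)) := by
  have h : HasDerivAt (fun s => uRed n b p (t, s)) (exp (rMat n b t x) *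
      ((-(t : ℂ) / 2) • 1 * p (zRed t x) + (1 : ℝ) • deriv p (zRed t x))) x := by
    open scoped Matrix.Norms.Operator in
    exact hasDerivAt_exp_mul (hasDerivAt_rMat_x b t x) (commute_rMat b t x t)
      ((hp _).hasDerivAt.scomp x (hasDerivAt_zRed_x t x))
  rw [partialX, h.deriv, smul_one_mul, one_smul]
  congr 1
  module

theorem partialX_partialX_uRed (hp : Differentiable ℝ p) (hp' : Differentiable ℝ (deriv p))
    (t x : ℝ) :
    partialX (partialX (uRed n b p)) (t, x) = exp (rMat n b t x) * (deriv (deriv p) (zRed t x)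
      - (t : ℂ) • deriv p (zRed t x) + ((t : ℂ) ^ 2 / 4) • p (zRed t x)) := by
  have h : HasDerivAt
      (fun s => exp (rMat n b t s) * (deriv p (zRed t s) - ((t : ℂ) / 2) • p (zRed t s)))
      (exp (rMat n b t x) * ((-(t : ℂ) / 2) • 1 * (deriv p (zRed t x) - ((t : ℂ) / 2) • p (zRed t x))
        + (1 : ℝ) • (deriv (deriv p) (zRed t x) - ((t : ℂ) / 2) • deriv p (zRed t x)))) x := by
    open scoped Matrix.Norms.Operator in
    exact hasDerivAt_exp_mul (hasDerivAt_rMat_x b t x) (commute_rMat b t x t)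
      (((hp' _).hasDerivAt.sub ((hp _).hasDerivAt.const_smul ((t : ℂ) / 2) :)).scomp x
        (hasDerivAt_zRed_x t x))
  show deriv (fun s => partialX (uRed n b p) (t, s)) x = _
  rw [funext (partialX_uRed b hp t)]
  refine h.deriv.trans ?_
  rw [smul_one_mul, one_smul]
  congr 1
  module

theorem partialT_uRed (hp : Differentiable ℝ p) (t x : ℝ) :
    partialT (uRed n b p) (t, x) = exp (rMat n b t x) * ((((t : ℂ) ^ 2 - x) / 2) • p (zRed t x)
      - b * p (zRed t x) - (t : ℂ) • deriv p (zRed t x)) := by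
  have h : HasDerivAt (fun s => uRed n b p (s, x)) (exp (rMat n b t x) *
      (((((t : ℂ) ^ 2 - x) / 2) • 1 - b) * p (zRed t x) + (-t) • deriv p (zRed t x))) t := by
    open scoped Matrix.Norms.Operator in
    exact hasDerivAt_exp_mul (hasDerivAt_rMat_t b t x) (fun s => commute_rMat b t x s x)
      ((hp _).hasDerivAt.scomp t (hasDerivAt_zRed_t t x))
  rw [partialT, h.deriv, sub_mul, smul_one_mul, neg_smul, ← Complex.coe_smul, ← sub_eq_add_neg]

theorem partialX_vRed (hq : Differentiable ℝ q) (t x : ℝ) :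
    partialX (vRed n b q) (t, x)
      = (deriv q (zRed t x) + ((t : ℂ) / 2) • q (zRed t x)) * exp (-rMat n b t x) := by
  have h : HasDerivAt (fun s => vRed n b q (t, s)) ((q (zRed t x) * -((-(t : ℂ) / 2) • 1)
      + (1 : ℝ) • deriv q (zRed t x)) * exp (-rMat n b t x)) x := by
    open scoped Matrix.Norms.Operator in
    exact hasDerivAt_mul_exp (hasDerivAt_rMat_x b t x).neg
      (fun s => (commute_rMat b t x t s).neg_left.neg_right)
      ((hq _).hasDerivAt.scomp x (hasDerivAt_zRed_x t x))
  rw [partialX, h.deriv, mul_neg, mul_smul_one, one_smul]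
  congr 1
  module

theorem partialX_partialX_vRed (hq : Differentiable ℝ q) (hq' : Differentiable ℝ (deriv q))
    (t x : ℝ) :
    partialX (partialX (vRed n b q)) (t, x) = (deriv (deriv q) (zRed t x)
      + (t : ℂ) • deriv q (zRed t x) + ((t : ℂ) ^ 2 / 4) • q (zRed t x)) * exp (-rMat n b t x) := by
  have h : HasDerivAt
      (fun s => (deriv q (zRed t s) + ((t : ℂ) / 2) • q (zRed t s)) * exp (-rMat n b t s))
      (((deriv q (zRed t x) + ((t : ℂ) / 2) • q (zRed t x)) * -((-(t : ℂ) / 2) • 1)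
        + (1 : ℝ) • (deriv (deriv q) (zRed t x) + ((t : ℂ) / 2) • deriv q (zRed t x)))
        * exp (-rMat n b t x)) x := by
    open scoped Matrix.Norms.Operator in
    exact hasDerivAt_mul_exp (hasDerivAt_rMat_x b t x).neg
      (fun s => (commute_rMat b t x t s).neg_left.neg_right)
      (((hq' _).hasDerivAt.add ((hq _).hasDerivAt.const_smul ((t : ℂ) / 2) :)).scomp x
        (hasDerivAt_zRed_x t x))
  show deriv (fun s => partialX (vRed n b q) (t, s)) x = _
  rw [funext (partialX_vRed b hq t)]
  refine h.deriv.trans ?_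
  rw [mul_neg, mul_smul_one, one_smul]
  congr 1
  module

theorem partialT_vRed (hq : Differentiable ℝ q) (t x : ℝ) :
    partialT (vRed n b q) (t, x) = (q (zRed t x) * b - (((t : ℂ) ^ 2 - x) / 2) • q (zRed t x)
      - (t : ℂ) • deriv q (zRed t x)) * exp (-rMat n b t x) := by
  have h : HasDerivAt (fun s => vRed n b q (s, x)) ((q (zRed t x) *
      -((((t : ℂ) ^ 2 - x) / 2) • 1 - b) + (-t) • deriv q (zRed t x)) * exp (-rMat n b t x)) t := by
    open scoped Matrix.Norms.Operator in
    exact hasDerivAt_mul_exp (hasDerivAt_rMat_t b t x).neg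
      (fun s => (commute_rMat b t x s x).neg_left.neg_right)
      ((hq _).hasDerivAt.scomp t (hasDerivAt_zRed_t t x))
  rw [partialT, h.deriv, neg_sub, mul_sub, mul_smul_one, neg_smul, ← Complex.coe_smul,
    ← sub_eq_add_neg]

theorem exp_neg_mul_exp (A : Matrix (Fin n) (Fin n) ℂ) : exp (-A) * exp A = 1 := by
  rw [← Matrix.exp_add_of_commute _ _ (Commute.refl A).neg_left, neg_add_cancel, exp_zero]

theorem uRed_mul_vRed_mul_uRed (w : ℝ × ℝ) : uRed n b p w * vRed n b q w * uRed n b p w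
    = exp (rMat n b w.1 w.2) * (p (zRed w.1 w.2) * q (zRed w.1 w.2) * p (zRed w.1 w.2)) := by
  simp only [uRed, vRed, mul_assoc]
  rw [← mul_assoc (exp (-rMat n b w.1 w.2)), exp_neg_mul_exp, one_mul]

theorem vRed_mul_uRed_mul_vRed (w : ℝ × ℝ) : vRed n b q w * uRed n b p w * vRed n b q w
    = q (zRed w.1 w.2) * p (zRed w.1 w.2) * q (zRed w.1 w.2) * exp (-rMat n b w.1 w.2) := by
  simp only [uRed, vRed, mul_assoc]
  rw [← mul_assoc (exp (-rMat n b w.1 w.2)), exp_neg_mul_exp, one_mul]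

end Reduction

theorem matrixNLS_galilean_reduction_general (n : ℕ)
    (b : Matrix (Fin n) (Fin n) ℂ)
    (p q : ℝ → Matrix (Fin n) (Fin n) ℂ)
    (hp : Differentiable ℝ p) (hp' : Differentiable ℝ (deriv p))
    (hq : Differentiable ℝ q) (hq' : Differentiable ℝ (deriv q))
    (hpeq : ∀ z : ℝ, deriv (deriv p) z =
      -(((z : ℂ)/2) • p z) - b * p z - 2 * (p z * q z * p z))
    (hqeq : ∀ z : ℝ, deriv (deriv q) z =
      -(((z : ℂ)/2) • q z) - q z * b - 2 * (q z * p z * q z)) :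
    (∀ w : ℝ × ℝ,
      partialT (uRed n b p) w = partialX (partialX (uRed n b p)) w
        + 2 * (uRed n b p w * vRed n b q w * uRed n b p w)) ∧
    (∀ w : ℝ × ℝ,
      partialT (vRed n b q) w = -(partialX (partialX (vRed n b q)) w)
        - 2 * (vRed n b q w * uRed n b p w * vRed n b q w)) := by
  refine ⟨fun ⟨t, x⟩ => ?_, fun ⟨t, x⟩ => ?_⟩
  · rw [partialT_uRed b hp, partialX_partialX_uRed b hp hp', uRed_mul_vRed_mul_uRed, hpeq, zRed]
    simp only [two_mul, mul_add, mul_sub, mul_neg, mul_smul_comm]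
    push_cast
    module
  · rw [partialT_vRed b hq, partialX_partialX_vRed b hq hq', vRed_mul_uRed_mul_vRed, hqeq, zRed]
    simp only [two_mul, add_mul, sub_mul, neg_mul, smul_mul_assoc]
    push_cast
    module

/-- if `p, q` satisfy the Galilean-invariant reduction
`p'' = −(z/2)p − bp − 2pqp`, `q'' = −(z/2)q − qb − 2qpq`, then
`u = e^r p(z)`, `v = q(z) e^{−r}` satisfy the matrix NLS system
`u_t = u_xx + 2uvu`, `v_t = −v_xx − 2vuv`. -/
theorem matrixNLS_galilean_reduction (n : ℕ) (hn : 1 ≤ n)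
    (b : Matrix (Fin n) (Fin n) ℂ)
    (p q : ℝ → Matrix (Fin n) (Fin n) ℂ)
    (hp : Differentiable ℝ p) (hp' : Differentiable ℝ (deriv p))
    (hq : Differentiable ℝ q) (hq' : Differentiable ℝ (deriv q))
    (hpeq : ∀ z : ℝ, deriv (deriv p) z =
      -(((z : ℂ)/2) • p z) - b * p z - 2 * (p z * q z * p z))
    (hqeq : ∀ z : ℝ, deriv (deriv q) z =
      -(((z : ℂ)/2) • q z) - q z * b - 2 * (q z * p z * q z)) :
    (∀ w : ℝ × ℝ,
      partialT (uRed n b p) w = partialX (partialX (uRed n b p)) w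
        + 2 * (uRed n b p w * vRed n b q w * uRed n b p w)) ∧
    (∀ w : ℝ × ℝ,
      partialT (vRed n b q) w = -(partialX (partialX (vRed n b q)) w)
        - 2 * (vRed n b q w * uRed n b p w * vRed n b q w)) :=
  matrixNLS_galilean_reduction_general n b p q hp hp' hq hq' hpeq hqeq
end

section
/- Let n ≥ 1 and b ∈ Mat_n. If p, q : ℂ → Mat_n are twice differentiable and satisfy p''(z) = −(z/2) p(z) − b p(z) − 2 p(z) q(z) p(z) and q''(z) = −(z/2) q(z) − q(z) b − 2 q(z) p(z) q(z) for all z, then the function z ↦ q(z) p'(z) − q'(z) p(z) has zero derivative, i.e., q p' − q' p is a constant matrix. -/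
/-!
Differentiating `W = q p' - q' p` gives `W' = q p'' - q'' p`, the two `q' p'` terms cancelling.
After substituting the equations, `q p''` and `q'' p` both equal `-(z/2) q p - q b p - 2 q p q p`,
so `W' = 0` and the entire function `W` is constant. The entrywise sup norm on matrices is not
submultiplicative, so the product rule is obtained from matrix multiplication as a continuous
bilinear map between finite-dimensional spaces rather than from `HasDerivAt.mul`.
-/

attribute [local instance] Matrix.normedAddCommGroup Matrix.normedSpace

section MatrixCalculus

variable {𝕜 : Type*} [NontriviallyNormedField 𝕜] [CompleteSpace 𝕜] {l m n : Type*}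
  [Fintype l] [Fintype m] [Fintype n]

variable (𝕜 l m n) in
noncomputable def Matrix.mulBilin : Matrix l m 𝕜 →L[𝕜] Matrix m n 𝕜 →L[𝕜] Matrix l n 𝕜 :=
  (LinearMap.mk₂ 𝕜 (· * ·) Matrix.add_mul Matrix.smul_mul Matrix.mul_add
    (fun c A B => Matrix.mul_smul A c B)).toContinuousBilinearMap

theorem HasDerivAt.matrix_mul {A : 𝕜 → Matrix l m 𝕜} {B : 𝕜 → Matrix m n 𝕜}
    {A' : Matrix l m 𝕜} {B' : Matrix m n 𝕜} {x : 𝕜}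
    (hA : HasDerivAt A A' x) (hB : HasDerivAt B B' x) :
    HasDerivAt (fun y => A y * B y) (A' * B x + A x * B') x := by
  rw [add_comm]
  exact (Matrix.mulBilin 𝕜 l m n).hasDerivAt_of_bilinear (fun _ => hA) (fun _ => hB)

theorem hasDerivAt_matrix_wronskian {f g : 𝕜 → Matrix m m 𝕜} {x : 𝕜}
    (hf : DifferentiableAt 𝕜 f x) (hf' : DifferentiableAt 𝕜 (deriv f) x)
    (hg : DifferentiableAt 𝕜 g x) (hg' : DifferentiableAt 𝕜 (deriv g) x) :
    HasDerivAt (fun y => g y * deriv f y - deriv g y * f y)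
      (g x * deriv (deriv f) x - deriv (deriv g) x * f x) x := by
  rw [← add_sub_add_left_eq_sub _ _ (deriv g x * deriv f x),
    add_comm (deriv g x * deriv f x) (deriv (deriv g) x * f x)]
  exact (hg.hasDerivAt.matrix_mul hf'.hasDerivAt).sub (hg'.hasDerivAt.matrix_mul hf.hasDerivAt)

end MatrixCalculus

theorem mul_galileanNLS_sub_galileanNLS_mul {K R : Type*} [CommRing K] [Ring R] [Algebra K R]
    (c : K) (b P Q : R) :
    Q * (-(c • P) - b * P - 2 * (P * Q * P)) - (-(c • Q) - Q * b - 2 * (Q * P * Q)) * P = 0 := by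
  simp only [two_mul, mul_add, add_mul, mul_sub, sub_mul, mul_smul_comm, smul_mul_assoc, mul_neg,
    neg_mul, mul_assoc, sub_self]

theorem matrixNLS_first_integral_general (n : ℕ)
    (b : Matrix (Fin n) (Fin n) ℂ)
    (p q : ℂ → Matrix (Fin n) (Fin n) ℂ)
    (hp : Differentiable ℂ p) (hp' : Differentiable ℂ (deriv p))
    (hq : Differentiable ℂ q) (hq' : Differentiable ℂ (deriv q))
    (hpeq : ∀ z : ℂ, deriv (deriv p) z =
      -((z/2) • p z) - b * p z - 2 * (p z * q z * p z))
    (hqeq : ∀ z : ℂ, deriv (deriv q) z =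
      -((z/2) • q z) - q z * b - 2 * (q z * p z * q z)) :
    (∀ z : ℂ, deriv (fun w => q w * deriv p w - deriv q w * p w) z = 0) ∧
    (∃ c : Matrix (Fin n) (Fin n) ℂ,
      ∀ z : ℂ, q z * deriv p z - deriv q z * p z = c) := by
  have hW : ∀ z, HasDerivAt (fun w => q w * deriv p w - deriv q w * p w) 0 z := fun z => by
    simpa only [hpeq, hqeq, mul_galileanNLS_sub_galileanNLS_mul] using
      hasDerivAt_matrix_wronskian (hp z) (hp' z) (hq z) (hq' z)
  exact ⟨fun z => (hW z).deriv, _, fun z => is_const_of_deriv_eq_zero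
    (fun w => (hW w).differentiableAt) (fun w => (hW w).deriv) z 0⟩

/-- for solutions of the reduced NLS system, `q p' − q' p` has zero
derivative, i.e. it is a constant matrix. -/
theorem matrixNLS_first_integral (n : ℕ) (hn : 1 ≤ n)
    (b : Matrix (Fin n) (Fin n) ℂ)
    (p q : ℂ → Matrix (Fin n) (Fin n) ℂ)
    (hp : Differentiable ℂ p) (hp' : Differentiable ℂ (deriv p))
    (hq : Differentiable ℂ q) (hq' : Differentiable ℂ (deriv q))
    (hpeq : ∀ z : ℂ, deriv (deriv p) z =
      -((z/2) • p z) - b * p z - 2 * (p z * q z * p z))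
    (hqeq : ∀ z : ℂ, deriv (deriv q) z =
      -((z/2) • q z) - q z * b - 2 * (q z * p z * q z)) :
    (∀ z : ℂ, deriv (fun w => q w * deriv p w - deriv q w * p w) z = 0) ∧
    (∃ c : Matrix (Fin n) (Fin n) ℂ,
      ∀ z : ℂ, q z * deriv p z - deriv q z * p z = c) :=
  matrixNLS_first_integral_general n b p q hp hp' hq hq' hpeq hqeq
end

section
/- Let n ≥ 1, b ∈ Mat_n, and γ ∈ ℂ. Suppose f, h : ℂ → Mat_n are differentiable (with f twice differentiable) and satisfy f'(z) = −f(z)² − (z/2)·I − b − h(z) and h'(z) = f(z) h(z) + h(z) f(z) − γ·I for all z. Then f satisfies the matrix Painlevé II equation P₂⁰: f''(z) = 2 f(z)³ + z·f(z) + b·f(z) + f(z)·b + (γ − 1/2)·I for all z. -/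
/-
Differentiating `f' = -f² - (z/2) I - b - h` once more and substituting both equations of the
system gives `f'' = -(f' f + f f') - I/2 - h'`, which expands to P₂⁰ without using
commutativity, so the argument works in any normed algebra.
-/

section NormedAlgebra

variable {𝕜 A : Type*}

theorem painleveII_rhs_eq [Field 𝕜] [CharZero 𝕜] [Ring A] [Algebra 𝕜 A] (F H B : A) (z γ : 𝕜) :
    -((-F ^ 2 - (z / 2) • (1 : A) - B - H) * F + F * (-F ^ 2 - (z / 2) • (1 : A) - B - H))
        - (1 / 2 : 𝕜) • (1 : A) - (F * H + H * F - γ • (1 : A))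
      = (2 : 𝕜) • F ^ 3 + z • F + B * F + F * B + (γ - 1 / 2) • (1 : A) := by
  simp only [sub_mul, mul_sub, neg_mul, mul_neg, smul_mul_assoc, mul_smul_comm,
    one_mul, mul_one, ← pow_succ, ← pow_succ']
  match_scalars <;> field_simp <;> ring

variable [NontriviallyNormedField 𝕜] [CharZero 𝕜] [NormedRing A] [NormedAlgebra 𝕜 A]

theorem hasDerivAt_deriv_of_painleveII_system {b : A} {γ : 𝕜} {f h : 𝕜 → A}
    (hf : Differentiable 𝕜 f) (hh : Differentiable 𝕜 h)
    (hfeq : ∀ z, deriv f z = -f z ^ 2 - (z / 2) • (1 : A) - b - h z)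
    (hheq : ∀ z, deriv h z = f z * h z + h z * f z - γ • (1 : A)) (z : 𝕜) :
    HasDerivAt (deriv f)
      ((2 : 𝕜) • f z ^ 3 + z • f z + b * f z + f z * b + (γ - 1 / 2) • (1 : A)) z := by
  have hF : HasDerivAt f (deriv f z) z := (hf z).hasDerivAt
  have hlin : HasDerivAt (fun w : 𝕜 => (w / 2) • (1 : A)) ((1 / 2 : 𝕜) • (1 : A)) z := by
    simpa using ((hasDerivAt_id z).div_const 2).smul_const (1 : A)
  have hD : HasDerivAt (fun w => -f w ^ 2 - (w / 2) • (1 : A) - b - h w)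
      (-(deriv f z * f z + f z * deriv f z) - (1 / 2 : 𝕜) • (1 : A) - deriv h z) z := by
    simpa only [sq] using
      (((hF.fun_mul hF).fun_neg.fun_sub hlin).sub_const b).fun_sub (hh z).hasDerivAt
  rw [funext hfeq]
  refine hD.congr_deriv ?_
  rw [hfeq z, hheq z, painleveII_rhs_eq]

end NormedAlgebra

theorem fh_system_gives_P20_general (n : ℕ)
    (b : Matrix (Fin n) (Fin n) ℂ) (γ : ℂ)
    (f h : ℂ → Matrix (Fin n) (Fin n) ℂ)
    (hf : Differentiable ℂ f)
    (hh : Differentiable ℂ h)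
    (hfeq : ∀ z : ℂ, deriv f z =
      -(f z) ^ 2 - (z/2) • (1 : Matrix (Fin n) (Fin n) ℂ) - b - h z)
    (hheq : ∀ z : ℂ, deriv h z =
      f z * h z + h z * f z - γ • (1 : Matrix (Fin n) (Fin n) ℂ)) :
    ∀ z : ℂ, deriv (deriv f) z =
      (2 : ℂ) • (f z) ^ 3 + z • f z + b * f z + f z * b
        + (γ - 1/2) • (1 : Matrix (Fin n) (Fin n) ℂ) := by
  -- The `ℓ∞`-operator norm makes `Mat_n` a normed algebra and induces the same topology as the
  -- entrywise sup norm; derivatives depend only on the topology.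
  let _ := (Matrix.linftyOpNormedRing : NormedRing (Matrix (Fin n) (Fin n) ℂ))
  let _ := (Matrix.linftyOpNormedAlgebra : NormedAlgebra ℂ (Matrix (Fin n) (Fin n) ℂ))
  exact fun z => (hasDerivAt_deriv_of_painleveII_system hf hh hfeq hheq z).deriv

/-- if `f' = −f² − z/2 − b − h` and `h' = fh + hf − γ`, then `f`
satisfies the matrix Painlevé II equation P₂⁰:
`f'' = 2f³ + z f + b f + f b + (γ − 1/2) I`. -/
theorem fh_system_gives_P20 (n : ℕ) (hn : 1 ≤ n)
    (b : Matrix (Fin n) (Fin n) ℂ) (γ : ℂ)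
    (f h : ℂ → Matrix (Fin n) (Fin n) ℂ)
    (hf : Differentiable ℂ f) (hf' : Differentiable ℂ (deriv f))
    (hh : Differentiable ℂ h)
    (hfeq : ∀ z : ℂ, deriv f z =
      -(f z) ^ 2 - (z/2) • (1 : Matrix (Fin n) (Fin n) ℂ) - b - h z)
    (hheq : ∀ z : ℂ, deriv h z =
      f z * h z + h z * f z - γ • (1 : Matrix (Fin n) (Fin n) ℂ)) :
    ∀ z : ℂ, deriv (deriv f) z =
      (2 : ℂ) • (f z) ^ 3 + z • f z + b * f z + f z * b
        + (γ - 1/2) • (1 : Matrix (Fin n) (Fin n) ℂ) :=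
  fh_system_gives_P20_general n b γ f h hf hh hfeq hheq
end

section
/- Let n ≥ 1 and c ∈ Mat_n. Suppose f, h : ℂ → Mat_n are differentiable (with f twice differentiable) and satisfy f'(z) = −f(z)² − (z/2)·I − h(z) and h'(z) = 2 h(z) f(z) − 2c for all z. Then f satisfies the matrix Painlevé II equation P₂¹ with κ = −1: f''(z) = −[f(z), f'(z)] + 2 f(z)³ + z·f(z) + 2c − (1/2)·I for all z. -/
attribute [local instance] Matrix.normedAddCommGroup Matrix.normedSpace

/-!
Differentiating `f' = -f² - z/2 - h` gives `f'' = -(f'f + ff') - 1/2 - h'`. Substituting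
`h' = 2hf - 2c` and eliminating `h = -f' - f² - z/2` turns `-(f'f + ff') - 2hf` into
`f'f - ff' + 2f³ + zf`; since `f` and `f'` need not commute, the commutator term survives.
-/

section

variable {𝕜 : Type*} [NontriviallyNormedField 𝕜]

theorem Matrix.hasDerivAt_mul {l m n : Type*} [Fintype l] [Fintype m] [Fintype n]
    {f : 𝕜 → Matrix l m 𝕜} {g : 𝕜 → Matrix m n 𝕜} {f' : Matrix l m 𝕜} {g' : Matrix m n 𝕜}
    {x : 𝕜} (hf : HasDerivAt f f' x) (hg : HasDerivAt g g' x) :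
    HasDerivAt (fun y => f y * g y) (f' * g x + f x * g') x := by
  have hf_entry (i j) : HasDerivAt (fun y => f y i j) (f' i j) x :=
    hasDerivAt_pi.1 (hasDerivAt_pi.1 hf i) j
  have hg_entry (i j) : HasDerivAt (fun y => g y i j) (g' i j) x :=
    hasDerivAt_pi.1 (hasDerivAt_pi.1 hg i) j
  refine hasDerivAt_pi.2 fun i => hasDerivAt_pi.2 fun j => ?_
  simp only [Matrix.mul_apply, Matrix.add_apply, ← Finset.sum_add_distrib]
  exact HasDerivAt.fun_sum fun k _ => (hf_entry i k).fun_mul (hg_entry k j)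

theorem deriv_deriv_eq_of_deriv_eq_riccati {ι : Type*} [Fintype ι] [DecidableEq ι]
    {f h : 𝕜 → Matrix ι ι 𝕜} (hf : Differentiable 𝕜 f) (hh : Differentiable 𝕜 h)
    (hfeq : ∀ z, deriv f z = -f z ^ 2 - (z / 2) • (1 : Matrix ι ι 𝕜) - h z) (z : 𝕜) :
    deriv (deriv f) z =
      -(deriv f z * f z + f z * deriv f z) - (1 / 2 : 𝕜) • (1 : Matrix ι ι 𝕜) - deriv h z := by
  have hsq := Matrix.hasDerivAt_mul (hf z).hasDerivAt (hf z).hasDerivAt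
  have hlin : HasDerivAt (fun w : 𝕜 => (w / 2) • (1 : Matrix ι ι 𝕜)) ((1 / 2 : 𝕜) • 1) z :=
    ((hasDerivAt_id' z).div_const 2).smul_const 1
  conv_lhs => rw [funext hfeq]
  simp only [sq]
  exact ((hsq.neg.sub hlin).sub (hh z).hasDerivAt).deriv

end

theorem fh_system_gives_P21_general (n : ℕ)
    (c : Matrix (Fin n) (Fin n) ℂ)
    (f h : ℂ → Matrix (Fin n) (Fin n) ℂ)
    (hf : Differentiable ℂ f)
    (hh : Differentiable ℂ h)
    (hfeq : ∀ z : ℂ, deriv f z =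
      -(f z) ^ 2 - (z/2) • (1 : Matrix (Fin n) (Fin n) ℂ) - h z)
    (hheq : ∀ z : ℂ, deriv h z = 2 * (h z * f z) - 2 * c) :
    ∀ z : ℂ, deriv (deriv f) z =
      -(f z * deriv f z - deriv f z * f z) + (2 : ℂ) • (f z) ^ 3 + z • f z
        + 2 * c - (1/2 : ℂ) • (1 : Matrix (Fin n) (Fin n) ℂ) := by
  intro z
  have h_eq : h z = -deriv f z - f z ^ 2 - (z / 2) • 1 := by rw [hfeq]; abel
  rw [deriv_deriv_eq_of_deriv_eq_riccati hf hh hfeq, hheq, h_eq]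
  simp only [sub_mul, neg_mul, smul_mul_assoc, Matrix.one_mul, pow_succ, pow_zero, mul_assoc,
    two_mul]
  module

/-- if `f' = −f² − z/2 − h` and `h' = 2hf − 2c`, then `f` satisfies
the matrix Painlevé II equation P₂¹ with `κ = −1`:
`f'' = −[f, f'] + 2f³ + z f + 2c − (1/2) I`. -/
theorem fh_system_gives_P21 (n : ℕ) (hn : 1 ≤ n)
    (c : Matrix (Fin n) (Fin n) ℂ)
    (f h : ℂ → Matrix (Fin n) (Fin n) ℂ)
    (hf : Differentiable ℂ f) (hf' : Differentiable ℂ (deriv f))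
    (hh : Differentiable ℂ h)
    (hfeq : ∀ z : ℂ, deriv f z =
      -(f z) ^ 2 - (z/2) • (1 : Matrix (Fin n) (Fin n) ℂ) - h z)
    (hheq : ∀ z : ℂ, deriv h z = 2 * (h z * f z) - 2 * c) :
    ∀ z : ℂ, deriv (deriv f) z =
      -(f z * deriv f z - deriv f z * f z) + (2 : ℂ) • (f z) ^ 3 + z • f z
        + 2 * c - (1/2 : ℂ) • (1 : Matrix (Fin n) (Fin n) ℂ) :=
  fh_system_gives_P21_general n c f h hf hh hfeq hheq
end

section
/- Let n ≥ 1 and b ∈ Mat_n. Suppose p, q : ℂ → Mat_n are twice differentiable and satisfy p''(z) = −(z/2) p(z) − b p(z) − 2 p(z) q(z) p(z) and q''(z) = −(z/2) q(z) − q(z) b − 2 q(z) p(z) q(z) for all z. For ζ ∈ ℂ define the 2×2 block matrices (with n×n blocks) B(ζ,z) = [[ζ·I, −q(z)], [p(z), −ζ·I]] and A(ζ,z) = [[8ζ²·I + 4 q(z) p(z) + z·I, −8ζ q(z) − 4 q'(z)], [8ζ p(z) − 4 p'(z), −8ζ²·I − 4 p(z) q(z) − z·I − 4b]]. Then for every ζ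 ∈ ℂ and every z, the isomonodromic Lax equation holds: ∂_z A(ζ,z) = [[I, 0], [0, −I]] + B(ζ,z) A(ζ,z) − A(ζ,z) B(ζ,z), where [[I,0],[0,−I]] = ∂_ζ B(ζ,z). -/
attribute [local instance] Matrix.normedAddCommGroup Matrix.normedSpace

/-- The matrix `B(ζ,z) = [[ζI, −q(z)], [p(z), −ζI]]`. -/
noncomputable def Blax (n : ℕ) (p q : ℂ → Matrix (Fin n) (Fin n) ℂ) (ζ z : ℂ) :
    Matrix (Fin n ⊕ Fin n) (Fin n ⊕ Fin n) ℂ :=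
  Matrix.fromBlocks (ζ • 1) (-(q z)) (p z) (-(ζ • 1))

/-- The matrix `A(ζ,z) = [[8ζ²+4qp+z, −8ζq−4q'], [8ζp−4p', −8ζ²−4pq−z−4b]]`. -/
noncomputable def Alax (n : ℕ) (b : Matrix (Fin n) (Fin n) ℂ)
    (p q : ℂ → Matrix (Fin n) (Fin n) ℂ) (ζ z : ℂ) :
    Matrix (Fin n ⊕ Fin n) (Fin n ⊕ Fin n) ℂ :=
  Matrix.fromBlocks
    ((8 * ζ^2) • 1 + 4 * (q z * p z) + z • 1)
    (-((8 * ζ) • q z) - 4 * deriv q z)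
    ((8 * ζ) • p z - 4 * deriv p z)
    (-((8 * ζ^2) • 1) - 4 * (p z * q z) - z • 1 - 4 * b)

/-!
`∂_ζ B` and `∂_z A` are computed block by block. In the expansion of `B_ζ + [B, A]` into blocks
the powers of `ζ` cancel except in `-8ζq'` and `8ζp'`: the diagonal blocks become `4(qp)' + I`
and `-4(pq)' - I`, and the off-diagonal blocks equal `-8ζq' - 4q''` and `8ζp' - 4p''` exactly
when `p`, `q` satisfy the reduced NLS system. These are the blocks of `∂_z A`.
-/

section BlockDerivatives

variable {𝕜 : Type*} [NontriviallyNormedField 𝕜] {x : 𝕜}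

theorem HasDerivAt.matrix_apply {E m n : Type*} [NormedAddCommGroup E] [NormedSpace 𝕜 E]
    [Fintype m] [Fintype n] {f : 𝕜 → Matrix m n E} {f' : Matrix m n E}
    (hf : HasDerivAt f f' x) (i : m) (j : n) : HasDerivAt (fun y => f y i j) (f' i j) x :=
  hasDerivAt_pi.1 (hasDerivAt_pi.1 hf i) j

theorem HasDerivAt.matrix_fromBlocks {E : Type*} [NormedAddCommGroup E] [NormedSpace 𝕜 E]
    {l m n o : Type*} [Fintype l] [Fintype m] [Fintype n] [Fintype o]
    {A : 𝕜 → Matrix n l E} {B : 𝕜 → Matrix n m E} {C : 𝕜 → Matrix o l E}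
    {D : 𝕜 → Matrix o m E} {A' : Matrix n l E} {B' : Matrix n m E} {C' : Matrix o l E}
    {D' : Matrix o m E} (hA : HasDerivAt A A' x) (hB : HasDerivAt B B' x)
    (hC : HasDerivAt C C' x) (hD : HasDerivAt D D' x) :
    HasDerivAt (fun y => Matrix.fromBlocks (A y) (B y) (C y) (D y))
      (Matrix.fromBlocks A' B' C' D') x := by
  refine hasDerivAt_pi.2 fun i => hasDerivAt_pi.2 fun j => ?_
  rcases i with i | i <;> rcases j with j | j
  exacts [hA.matrix_apply i j, hB.matrix_apply i j, hC.matrix_apply i j, hD.matrix_apply i j]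

theorem HasDerivAt.matrix_mul_s13 {n : Type*} [Fintype n] [DecidableEq n]
    {f g : 𝕜 → Matrix n n 𝕜} {f' g' : Matrix n n 𝕜}
    (hf : HasDerivAt f f' x) (hg : HasDerivAt g g' x) :
    HasDerivAt (fun y => f y * g y) (f' * g x + f x * g') x := by
  -- Any normed ring structure inducing the product topology computes the same derivative.
  let : NormedRing (Matrix n n 𝕜) := Matrix.linftyOpNormedRing
  let : NormedAlgebra 𝕜 (Matrix n n 𝕜) := Matrix.linftyOpNormedAlgebra
  exact hf.mul hg

end BlockDerivatives

section LaxPair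

variable {n : ℕ} (b : Matrix (Fin n) (Fin n) ℂ) {p q : ℂ → Matrix (Fin n) (Fin n) ℂ} (ζ z : ℂ)

theorem hasDerivAt_Blax_spectral :
    HasDerivAt (fun w => Blax n p q w z) (Matrix.fromBlocks 1 0 0 (-1)) ζ := by
  have hI := (hasDerivAt_id ζ).smul_const (1 : Matrix (Fin n) (Fin n) ℂ)
  simpa [Blax] using
    hI.matrix_fromBlocks (hasDerivAt_const ζ (-q z)) (hasDerivAt_const ζ (p z)) hI.neg

theorem hasDerivAt_Alax (hp : DifferentiableAt ℂ p z) (hp' : DifferentiableAt ℂ (deriv p) z)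
    (hq : DifferentiableAt ℂ q z) (hq' : DifferentiableAt ℂ (deriv q) z) :
    HasDerivAt (fun w => Alax n b p q ζ w)
      (Matrix.fromBlocks (4 * (deriv q z * p z + q z * deriv p z) + 1)
        (-((8 * ζ) • deriv q z) - 4 * deriv (deriv q) z)
        ((8 * ζ) • deriv p z - 4 * deriv (deriv p) z)
        (-(4 * (deriv p z * q z + p z * deriv q z)) - 1)) z := by
  have h4 := hasDerivAt_const z (4 : Matrix (Fin n) (Fin n) ℂ)
  have hI := (hasDerivAt_id z).smul_const (1 : Matrix (Fin n) (Fin n) ℂ)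
  have h8 := hasDerivAt_const z ((8 * ζ ^ 2) • (1 : Matrix (Fin n) (Fin n) ℂ))
  have h11 := (h8.add (h4.matrix_mul_s13 (hq.hasDerivAt.matrix_mul_s13 hp.hasDerivAt))).add hI
  have h12 := (hq.hasDerivAt.const_smul (8 * ζ)).neg.sub (h4.matrix_mul_s13 hq'.hasDerivAt)
  have h21 := (hp.hasDerivAt.const_smul (8 * ζ)).sub (h4.matrix_mul_s13 hp'.hasDerivAt)
  have h22 := ((h8.neg.sub (h4.matrix_mul_s13 (hp.hasDerivAt.matrix_mul_s13 hq.hasDerivAt))).sub hI).sub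
    (hasDerivAt_const z (4 * b))
  refine (h11.matrix_fromBlocks h12 h21 h22).congr_deriv ?_
  simp only [zero_mul, zero_add, one_smul, neg_zero, sub_zero, zero_sub]
  -- The two sides differ only in defeq instance paths inside `deriv`, which `simp` does not see.
  rfl

theorem fromBlocks_add_Blax_mul_Alax_sub_Alax_mul_Blax
    (hpeq : deriv (deriv p) z = -((z / 2) • p z) - b * p z - 2 * (p z * q z * p z))
    (hqeq : deriv (deriv q) z = -((z / 2) • q z) - q z * b - 2 * (q z * p z * q z)) :
    Matrix.fromBlocks 1 0 0 (-1) + Blax n p q ζ z * Alax n b p q ζ z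
        - Alax n b p q ζ z * Blax n p q ζ z =
      Matrix.fromBlocks (4 * (deriv q z * p z + q z * deriv p z) + 1)
        (-((8 * ζ) • deriv q z) - 4 * deriv (deriv q) z)
        ((8 * ζ) • deriv p z - 4 * deriv (deriv p) z)
        (-(4 * (deriv p z * q z + p z * deriv q z)) - 1) := by
  rw [Blax, Alax, Matrix.fromBlocks_multiply, Matrix.fromBlocks_multiply, Matrix.fromBlocks_add,
    sub_eq_add_neg, Matrix.fromBlocks_neg, Matrix.fromBlocks_add, Matrix.fromBlocks_inj, hpeq, hqeq]
  simp only [← Nat.ofNat_nsmul_eq_mul, mul_add, add_mul, mul_sub, sub_mul, mul_neg, neg_mul,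
    smul_mul_assoc, mul_smul_comm, Matrix.mul_one, Matrix.one_mul, mul_assoc]
  refine ⟨?_, ?_, ?_, ?_⟩ <;> module

end LaxPair

theorem matrixNLS_lax_pair_general (n : ℕ)
    (b : Matrix (Fin n) (Fin n) ℂ)
    (p q : ℂ → Matrix (Fin n) (Fin n) ℂ)
    (hp : Differentiable ℂ p) (hp' : Differentiable ℂ (deriv p))
    (hq : Differentiable ℂ q) (hq' : Differentiable ℂ (deriv q))
    (hpeq : ∀ z : ℂ, deriv (deriv p) z =
      -((z/2) • p z) - b * p z - 2 * (p z * q z * p z))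
    (hqeq : ∀ z : ℂ, deriv (deriv q) z =
      -((z/2) • q z) - q z * b - 2 * (q z * p z * q z)) :
    ∀ ζ z : ℂ,
      deriv (fun w => Alax n b p q ζ w) z =
        Matrix.fromBlocks 1 0 0 (-1)
          + Blax n p q ζ z * Alax n b p q ζ z - Alax n b p q ζ z * Blax n p q ζ z ∧
      deriv (fun w => Blax n p q w z) ζ = Matrix.fromBlocks 1 0 0 (-1) := by
  intro ζ z
  refine ⟨?_, (hasDerivAt_Blax_spectral ζ z).deriv⟩
  exact (hasDerivAt_Alax b ζ z (hp z) (hp' z) (hq z) (hq' z)).deriv.trans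
    (fromBlocks_add_Blax_mul_Alax_sub_Alax_mul_Blax b ζ z (hpeq z) (hqeq z)).symm

/-- isomonodromic Lax pair `A' = B_ζ + [B, A]` for the reduced NLS
system, together with `B_ζ = [[I,0],[0,−I]]`. -/
theorem matrixNLS_lax_pair (n : ℕ) (hn : 1 ≤ n)
    (b : Matrix (Fin n) (Fin n) ℂ)
    (p q : ℂ → Matrix (Fin n) (Fin n) ℂ)
    (hp : Differentiable ℂ p) (hp' : Differentiable ℂ (deriv p))
    (hq : Differentiable ℂ q) (hq' : Differentiable ℂ (deriv q))
    (hpeq : ∀ z : ℂ, deriv (deriv p) z =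
      -((z/2) • p z) - b * p z - 2 * (p z * q z * p z))
    (hqeq : ∀ z : ℂ, deriv (deriv q) z =
      -((z/2) • q z) - q z * b - 2 * (q z * p z * q z)) :
    ∀ ζ z : ℂ,
      deriv (fun w => Alax n b p q ζ w) z =
        Matrix.fromBlocks 1 0 0 (-1)
          + Blax n p q ζ z * Alax n b p q ζ z - Alax n b p q ζ z * Blax n p q ζ z ∧
      deriv (fun w => Blax n p q w z) ζ = Matrix.fromBlocks 1 0 0 (-1) :=
  matrixNLS_lax_pair_general n b p q hp hp' hq hq' hpeq hqeq
end

section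
/- Let n ≥ 1 and let a, b ∈ Mat_n satisfy [b, a] = −2b. Suppose y : ℂ → Mat_n is three times differentiable and satisfies the matrix Painlevé II equation P₂² with κ = −2: y''(z) = −2[y(z), y'(z)] + 2 y(z)³ + z·y(z) + b·y(z) + y(z)·b + a for all z. Then y satisfies the third-order reduced equation: y'''(z) = 3[y''(z), y(z)] + 6 y(z) y'(z) y(z) + y(z) + z·y'(z) + (y'(z) + y(z)²)·b + b·(y'(z) − y(z)²) + [y(z), a] for all z. (This is the self-similar reduction y''' = 3[y'',y] + 6yy'y + y + z y' + 3(y' + y²)c₀ + 3c₀(y' − y²) + [d,y] with 3c₀ = b and d = −a.) -/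
/-!
Differentiating P₂² once expresses `y'''` through `y, y', y''` by the product rule:
`y''' = -2[y, y''] + 2(y'y² + yy'y + y²y') + y + z y' + b y' + y' b`.
Comparing with the reduced equation, the difference is `[y'', y] + 4yy'y - 2y'y² - 2y²y' + y²b - by² + [y, a]`,
and substituting P₂² for `y''` in `[y'', y]` cancels it term by term.
-/

attribute [local instance] Matrix.normedAddCommGroup Matrix.normedSpace

/- The entrywise sup norm on matrices is not submultiplicative, so `HasDerivAt.mul` does not apply;
matrix multiplication is instead a continuous bilinear map by finite dimensionality. -/
theorem HasDerivAt.matrix_mul_s18 {𝕜 m : Type*} [NontriviallyNormedField 𝕜] [CompleteSpace 𝕜]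
    [Fintype m] {u v : 𝕜 → Matrix m m 𝕜} {u' v' : Matrix m m 𝕜} {z : 𝕜}
    (hu : HasDerivAt u u' z) (hv : HasDerivAt v v' z) :
    HasDerivAt (fun w => u w * v w) (u z * v' + u' * v z) z :=
  let B : Matrix m m 𝕜 →L[𝕜] Matrix m m 𝕜 →L[𝕜] Matrix m m 𝕜 :=
    LinearMap.toContinuousLinearMap
      (LinearMap.toContinuousLinearMap.toLinearMap ∘ₗ mulLinearMap 𝕜)
  B.hasDerivAt_of_bilinear (fun _ => hu) (fun _ => hv)

theorem hasDerivAt_deriv_deriv_of_painleveII {𝕜 m : Type*} [NontriviallyNormedField 𝕜]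
    [CompleteSpace 𝕜] [Fintype m] [DecidableEq m] {a b : Matrix m m 𝕜} {y : 𝕜 → Matrix m m 𝕜}
    {z : 𝕜} (hy : DifferentiableAt 𝕜 y z) (hy' : DifferentiableAt 𝕜 (deriv y) z)
    (heq : ∀ w, deriv (deriv y) w =
      -((2 : 𝕜) • (y w * deriv y w - deriv y w * y w)) + (2 : 𝕜) • y w ^ 3
        + w • y w + b * y w + y w * b + a) :
    HasDerivAt (deriv (deriv y))
      (-((2 : 𝕜) • (y z * deriv (deriv y) z - deriv (deriv y) z * y z))
        + (2 : 𝕜) • (deriv y z * y z ^ 2 + y z * deriv y z * y z + y z ^ 2 * deriv y z)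
        + y z + z • deriv y z + b * deriv y z + deriv y z * b) z := by
  -- The ascriptions make `deriv` carry the same (non-normed) instances as in the statement,
  -- so that `noncomm_ring` below sees identical atoms.
  have hY : HasDerivAt y (deriv y z) z := hy.hasDerivAt
  have hY' : HasDerivAt (deriv y) (deriv (deriv y) z) z := hy'.hasDerivAt
  have hcube : HasDerivAt (fun w => y w ^ 3)
      (y z * (y z * deriv y z + deriv y z * y z) + deriv y z * (y z * y z)) z := by
    simp only [pow_succ', pow_zero, mul_one]
    exact hY.matrix_mul_s18 (hY.matrix_mul_s18 hY)
  have hrhs := (((((((hY.matrix_mul_s18 hY').sub (hY'.matrix_mul_s18 hY)).const_smul (2 : 𝕜)).neg.add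
    (hcube.const_smul (2 : 𝕜))).add ((hasDerivAt_id z).smul hY)).add
    ((hasDerivAt_const z b).matrix_mul_s18 hY)).add (hY.matrix_mul_s18 (hasDerivAt_const z b))).add_const a
  refine (hrhs.congr_of_eventuallyEq (.of_forall heq)).congr_deriv ?_
  simp only [id, one_smul, mul_zero, zero_mul, add_zero]
  noncomm_ring

theorem painleveII_derivative_eq_mkdvReduction {R A : Type*} [CommRing R] [Ring A] [Algebra R A]
    {a b Y Y' Y'' : A} {z : R}
    (hY'' : Y'' = -((2 : R) • (Y * Y' - Y' * Y)) + (2 : R) • Y ^ 3 + z • Y + b * Y + Y * b + a) :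
    -((2 : R) • (Y * Y'' - Y'' * Y)) + (2 : R) • (Y' * Y ^ 2 + Y * Y' * Y + Y ^ 2 * Y')
        + Y + z • Y' + b * Y' + Y' * b =
      3 * (Y'' * Y - Y * Y'') + 6 * (Y * Y' * Y) + Y + z • Y'
        + (Y' + Y ^ 2) * b + b * (Y' - Y ^ 2) + (Y * a - a * Y) := by
  subst hY''
  simp only [two_smul]
  noncomm_ring

theorem matrixP22_satisfies_mkdv_reduction_general (n : ℕ)
    (a b : Matrix (Fin n) (Fin n) ℂ)
    (y : ℂ → Matrix (Fin n) (Fin n) ℂ)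
    (hy : Differentiable ℂ y) (hy' : Differentiable ℂ (deriv y))
    (heq : ∀ z : ℂ, deriv (deriv y) z =
      -((2 : ℂ) • (y z * deriv y z - deriv y z * y z)) + (2 : ℂ) • (y z) ^ 3
        + z • y z + b * y z + y z * b + a) :
    ∀ z : ℂ, deriv (deriv (deriv y)) z =
      3 * (deriv (deriv y) z * y z - y z * deriv (deriv y) z)
        + 6 * (y z * deriv y z * y z) + y z + z • deriv y z
        + (deriv y z + (y z)^2) * b + b * (deriv y z - (y z)^2)
        + (y z * a - a * y z) := by
  intro z
  -- `Eq.trans` rather than `rw`: `HasDerivAt.deriv` states the equation with the normed instances.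
  exact (hasDerivAt_deriv_deriv_of_painleveII (hy z) (hy' z) heq).deriv.trans
    (painleveII_derivative_eq_mkdvReduction (heq z))

/-- every solution of the matrix Painlevé II equation P₂² with
`κ = −2` and `[b, a] = −2b` satisfies the self-similar reduction of the matrix
mKdV-type equation:
`y''' = 3[y'', y] + 6yy'y + y + z y' + (y' + y²)b + b(y' − y²) + [y, a]`. -/
theorem matrixP22_satisfies_mkdv_reduction (n : ℕ) (hn : 1 ≤ n)
    (a b : Matrix (Fin n) (Fin n) ℂ)
    (hba : b * a - a * b = -(2 * b))
    (y : ℂ → Matrix (Fin n) (Fin n) ℂ)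
    (hy : Differentiable ℂ y) (hy' : Differentiable ℂ (deriv y))
    (hy'' : Differentiable ℂ (deriv (deriv y)))
    (heq : ∀ z : ℂ, deriv (deriv y) z =
      -((2 : ℂ) • (y z * deriv y z - deriv y z * y z)) + (2 : ℂ) • (y z) ^ 3
        + z • y z + b * y z + y z * b + a) :
    ∀ z : ℂ, deriv (deriv (deriv y)) z =
      3 * (deriv (deriv y) z * y z - y z * deriv (deriv y) z)
        + 6 * (y z * deriv y z * y z) + y z + z • deriv y z
        + (deriv y z + (y z)^2) * b + b * (deriv y z - (y z)^2)
        + (y z * a - a * y z) :=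
  matrixP22_satisfies_mkdv_reduction_general n a b y hy hy' heq
end
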